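/- The mixed tensor preserves strategy existence: for an opponent game O and a player game P, the player game O ⊗ʳ P has a strategy if and only if both O and P have strategies. -/

import Mathlib

/-- Rose trees: the unlabeled shape of a game tree. -/
inductive RTree : Type where
  | node : List RTree → RTree

mutual
/-- An opponent game: a finite list of player games (its children). -/
inductive OGame : Type where
  | mk : List PGame → OGame
/-- A player game: a finite list of opponent games (its children). -/
inductive PGame : Type where
  | mk : List OGame → PGame
end

mutual
/-- The dual of an opponent game. -/
def OGame.dual : OGame → PGame
  | .mk ps => .mk (ps.attach.map fun ⟨p, _⟩ => p.dual)
/-- The dual of a player game. -/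
def PGame.dual : PGame → OGame
  | .mk os => .mk (os.attach.map fun ⟨o, _⟩ => o.dual)
end

mutual
/-- Strategy existence in an opponent game: a conjunction over children. -/
def OGame.strat : OGame → Bool
  | .mk ps => ps.attach.all fun ⟨p, _⟩ => p.strat
/-- Strategy existence in a player game: a disjunction over children. -/
def PGame.strat : PGame → Bool
  | .mk os => os.attach.any fun ⟨o, _⟩ => o.strat
end

mutual
/-- Tensor of opponent games: `O ⊗ O' = (P_i ⊗ˡ O', O ⊗ʳ P'_k | …)`. -/
def otimes : OGame → OGame → OGame
  | .mk ps, .mk qs => .mk ((ps.attach.map fun ⟨p, _⟩ => oxl p (.mk qs)) ++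
      (qs.attach.map fun ⟨q, _⟩ => oxr (.mk ps) q))
  termination_by o o' => sizeOf o + sizeOf o'
  decreasing_by
  · have := List.sizeOf_lt_of_mem ‹p ∈ ps›; simp_all; omega
  · have := List.sizeOf_lt_of_mem ‹q ∈ qs›; simp_all; omega
/-- Mixed tensor `O ⊗ʳ P = {O ⊗ O_j | j ∈ J}`. -/
def oxr : OGame → PGame → PGame
  | o, .mk os => .mk (os.attach.map fun ⟨oj, _⟩ => otimes o oj)
  termination_by o p => sizeOf o + sizeOf p
  decreasing_by
  · have := List.sizeOf_lt_of_mem ‹oj ∈ os›; simp_all; omega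
/-- Mixed tensor `P ⊗ˡ O = {O_j ⊗ O | j ∈ J}`. -/
def oxl : PGame → OGame → PGame
  | .mk os, o => .mk (os.attach.map fun ⟨oj, _⟩ => otimes oj o)
  termination_by p o => sizeOf p + sizeOf o
  decreasing_by
  · have := List.sizeOf_lt_of_mem ‹oj ∈ os›; simp_all; omega
end

mutual
/-- Par of player games: `P ⅋ P' = {O_j ⅋ˡ P', P ⅋ʳ O'_k | …}`. -/
def parr : PGame → PGame → PGame
  | .mk os, .mk qs => .mk ((os.attach.map fun ⟨o, _⟩ => parrOP o (.mk qs)) ++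
      (qs.attach.map fun ⟨q, _⟩ => parrPO (.mk os) q))
  termination_by p p' => sizeOf p + sizeOf p'
  decreasing_by
  · have := List.sizeOf_lt_of_mem ‹o ∈ os›; simp_all; omega
  · have := List.sizeOf_lt_of_mem ‹q ∈ qs›; simp_all; omega
/-- Mixed par `P ⅋ʳ O = (P ⅋ P_i | i ∈ I)`. -/
def parrPO : PGame → OGame → OGame
  | p, .mk ps => .mk (ps.attach.map fun ⟨pi, _⟩ => parr p pi)
  termination_by p o => sizeOf p + sizeOf o
  decreasing_by
  · have := List.sizeOf_lt_of_mem ‹pi ∈ ps›; simp_all; omega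
/-- Mixed par `O ⅋ˡ P = (P_i ⅋ P | i ∈ I)`. -/
def parrOP : OGame → PGame → OGame
  | .mk ps, p => .mk (ps.attach.map fun ⟨pi, _⟩ => parr pi p)
  termination_by o p => sizeOf o + sizeOf p
  decreasing_by
  · have := List.sizeOf_lt_of_mem ‹pi ∈ ps›; simp_all; omega
end

mutual
/-- The exponential `!O`: `!() = ()` and `!O = ⊗_{i∈I} (b_i : !'P_i)` for `I ≠ ∅`. -/
def bang : OGame → OGame
  | .mk [] => .mk []
  | .mk (p :: ps) =>
      (ps.attach.map fun ⟨q, _⟩ => OGame.mk [bang' q]).foldl otimes (OGame.mk [bang' p])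
/-- The auxiliary exponential `!'{a_j : O_j} = {a_j : !O_j}`. -/
def bang' : PGame → PGame
  | .mk os => .mk (os.attach.map fun ⟨o, _⟩ => bang o)
end

mutual
/-- Underlying unlabeled tree of an opponent game. -/
def OGame.toTree : OGame → RTree
  | .mk ps => .node (ps.attach.map fun ⟨p, _⟩ => p.toTree)
/-- Underlying unlabeled tree of a player game. -/
def PGame.toTree : PGame → RTree
  | .mk os => .node (os.attach.map fun ⟨o, _⟩ => o.toTree)
end

/-- Number of nodes (including the root). -/
def RTree.nodes : RTree → ℕ
  | .node cs => 1 + (cs.attach.map fun ⟨c, _⟩ => c.nodes).sum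

/-- Number of parent-child edges. -/
def RTree.edges : RTree → ℕ
  | .node cs => cs.length + (cs.attach.map fun ⟨c, _⟩ => c.edges).sum

/-- Number of leaves. -/
def RTree.leaves : RTree → ℕ
  | .node [] => 1
  | .node cs => (cs.attach.map fun ⟨c, _⟩ => c.leaves).sum

/-- Uniform size: `u[leaf] = 0`, `u[node with n children] = (n-1) + Σ u[child]`. -/
def RTree.usize : RTree → ℕ
  | .node [] => 0
  | .node cs => (cs.length - 1) + (cs.attach.map fun ⟨c, _⟩ => c.usize).sum

/-- Depth: leaves have depth 0. -/
def RTree.depth : RTree → ℕ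
  | .node cs => (cs.attach.map fun ⟨c, _⟩ => c.depth + 1).foldr max 0

/-- `profile t k` is the number of nodes of `t` at depth `k`. -/
def RTree.profile : RTree → ℕ → ℕ
  | _, 0 => 1
  | .node cs, k + 1 => (cs.attach.map fun ⟨c, _⟩ => c.profile k).sum

mutual
/-- Number of player nodes of an opponent game. -/
def OGame.pnodes : OGame → ℕ
  | .mk ps => (ps.attach.map fun ⟨p, _⟩ => p.pnodes).sum
/-- Number of player nodes of a player game (the root counts). -/
def PGame.pnodes : PGame → ℕ
  | .mk os => 1 + (os.attach.map fun ⟨o, _⟩ => o.pnodes).sum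
end

mutual
/-- Number of edges leaving opponent nodes, for an opponent game. -/
def OGame.eo : OGame → ℕ
  | .mk ps => ps.length + (ps.attach.map fun ⟨p, _⟩ => p.eo).sum
/-- Number of edges leaving opponent nodes, for a player game. -/
def PGame.eo : PGame → ℕ
  | .mk os => (os.attach.map fun ⟨o, _⟩ => o.eo).sum
end

mutual
/-- Number of edges leaving player nodes, for an opponent game. -/
def OGame.ep : OGame → ℕ
  | .mk ps => (ps.attach.map fun ⟨p, _⟩ => p.ep).sum
/-- Number of edges leaving player nodes, for a player game. -/
def PGame.ep : PGame → ℕ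
  | .mk os => os.length + (os.attach.map fun ⟨o, _⟩ => o.ep).sum
end

/-- `γ(i,j) = 1` if `i` or `j` is zero or even, else `0`. -/
def gammaCoef (i j : ℕ) : ℕ :=
  if i = 0 ∨ j = 0 ∨ i % 2 = 0 ∨ j % 2 = 0 then 1 else 0

mutual
/-- The single-branch player chain `L_n`. -/
def Lp : ℕ → PGame
  | 0 => .mk []
  | n + 1 => .mk [Lo n]
/-- The single-branch opponent chain `L'_n`. -/
def Lo : ℕ → OGame
  | 0 => .mk []
  | n + 1 => .mk [Lp n]
end

/-!
By induction on the total size: `O ⊗ O'` is a conjunction over its children `P_i ⊗ˡ O'` and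
`O ⊗ʳ P'_k`, each of which is a disjunction over tensors of smaller games, so inductively
`‖P_i ⊗ˡ O'‖ = ‖P_i‖ ∧ ‖O'‖` and `‖O ⊗ʳ P'_k‖ = ‖O‖ ∧ ‖P'_k‖`; conjoining these gives
`‖O ⊗ O'‖ = ‖O‖ ∧ ‖O'‖`, and one more unfolding of `⊗ʳ` gives the mixed tensor.
-/

theorem OGame.strat_mk (ps : List PGame) :
    (OGame.mk ps).strat = true ↔ ∀ p ∈ ps, p.strat = true := by
  simp [OGame.strat]

theorem PGame.strat_mk (os : List OGame) :
    (PGame.mk os).strat = true ↔ ∃ o ∈ os, o.strat = true := by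
  simp [PGame.strat]

theorem otimes_mk (ps qs : List PGame) :
    otimes (.mk ps) (.mk qs) =
      .mk (ps.map (oxl · (.mk qs)) ++ qs.map (oxr (.mk ps))) := by
  rw [otimes]; simp

theorem oxr_mk (O : OGame) (os : List OGame) : oxr O (.mk os) = .mk (os.map (otimes O)) := by
  rw [oxr]; simp

theorem oxl_mk (os : List OGame) (O : OGame) : oxl (.mk os) O = .mk (os.map (otimes · O)) := by
  rw [oxl]; simp

theorem OGame.sizeOf_lt_of_mem_of_mem {ps : List PGame} {os : List OGame} {o : OGame}
    (hp : PGame.mk os ∈ ps) (ho : o ∈ os) : sizeOf o < sizeOf (OGame.mk ps) := by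
  have := List.sizeOf_lt_of_mem hp
  have := List.sizeOf_lt_of_mem ho
  simp only [OGame.mk.sizeOf_spec, PGame.mk.sizeOf_spec] at *
  omega

theorem PGame.strat_mk_map_iff {f : OGame → OGame} {A : Prop} {os : List OGame}
    (hf : ∀ o ∈ os, (f o).strat = true ↔ A ∧ o.strat = true) :
    (PGame.mk (os.map f)).strat = true ↔ A ∧ (PGame.mk os).strat = true := by
  simp only [PGame.strat_mk, List.mem_map]
  constructor
  · rintro ⟨_, ⟨o, ho, rfl⟩, hfo⟩
    exact ⟨((hf o ho).1 hfo).1, o, ho, ((hf o ho).1 hfo).2⟩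
  · rintro ⟨hA, o, ho, hso⟩
    exact ⟨f o, ⟨o, ho, rfl⟩, (hf o ho).2 ⟨hA, hso⟩⟩

theorem otimes_strat : ∀ O O' : OGame,
    (otimes O O').strat = true ↔ O.strat = true ∧ O'.strat = true
  | .mk ps, .mk qs => by
    have left : ∀ p ∈ ps, (oxl p (.mk qs)).strat = true ↔
        p.strat = true ∧ (OGame.mk qs).strat = true := by
      rintro ⟨os⟩ hp
      rw [oxl_mk, and_comm]
      exact PGame.strat_mk_map_iff fun o ho => (otimes_strat o (.mk qs)).trans and_comm
    have right : ∀ q ∈ qs, (oxr (.mk ps) q).strat = true ↔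
        (OGame.mk ps).strat = true ∧ q.strat = true := by
      rintro ⟨os⟩ hq
      rw [oxr_mk]
      exact PGame.strat_mk_map_iff fun o ho => otimes_strat (.mk ps) o
    rw [otimes_mk, OGame.strat_mk, List.forall_mem_append, List.forall_mem_map,
      List.forall_mem_map]
    constructor
    · rintro ⟨hl, hr⟩
      exact ⟨(OGame.strat_mk ps).2 fun p hp => ((left p hp).1 (hl p hp)).1,
        (OGame.strat_mk qs).2 fun q hq => ((right q hq).1 (hr q hq)).2⟩
    · rintro ⟨hO, hO'⟩
      exact ⟨fun p hp => (left p hp).2 ⟨(OGame.strat_mk ps).1 hO p hp, hO'⟩,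
        fun q hq => (right q hq).2 ⟨hO, (OGame.strat_mk qs).1 hO' q hq⟩⟩
termination_by O O' => sizeOf O + sizeOf O'
decreasing_by
  all_goals
    have := OGame.sizeOf_lt_of_mem_of_mem ‹_› ‹o ∈ os›
    omega

/-- O ⊗ʳ P has a strategy iff both O and P have strategies. -/
theorem oxr_strat (O : OGame) (P : PGame) :
    (oxr O P).strat = true ↔ (O.strat = true ∧ P.strat = true) := by
  obtain ⟨os⟩ := P
  rw [oxr_mk]
  exact PGame.strat_mk_map_iff fun o _ => otimes_strat O o
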